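/- Let (X,d) be a non-connected Robinson space with d(x,y) > 0 for all distinct x,y ∈ X, and suppose every connected component of G_{δ*} has diameter at most δ*. Then a total order < on X is a compatible order of (X,d) if and only if < is the composition of some total order on the set P of connected components of G_{δ*} with a choice, for each component S ∈ P, of a compatible order of the subspace (S,d). -/

import Mathlib

structure Dissim (X : Type*) where
  d : X → X → ℝ
  symm : ∀ x y, d x y = d y x
  nonneg : ∀ x y, 0 ≤ d x y
  self : ∀ x, d x x = 0

variable {X : Type*}

def Compatible (D : Dissim X) (lt : X → X → Prop) : Prop :=
  ∀ x y z : X, lt x y → lt y z → D.d x y ≤ D.d x z ∧ D.d y z ≤ D.d x z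

def IsCompatOrder (D : Dissim X) (lt : X → X → Prop) : Prop :=
  IsStrictTotalOrder X lt ∧ Compatible D lt

def Robinson (D : Dissim X) : Prop :=
  ∃ lt : X → X → Prop, IsCompatOrder D lt

def IsMmodule (D : Dissim X) (M : Set X) : Prop :=
  ∀ z ∉ M, ∀ x ∈ M, ∀ y ∈ M, D.d z x = D.d z y

def IsInterval (lt : X → X → Prop) (I : Set X) : Prop :=
  ∀ a b c : X, lt a b → lt b c → a ∈ I → c ∈ I → b ∈ I

def IsBlock (D : Dissim X) (Y : Set X) : Prop :=
  ∀ lt : X → X → Prop, IsCompatOrder D lt → IsInterval lt Y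

noncomputable def diam (D : Dissim X) (Y : Set X) : ℝ :=
  sSup (Set.image2 D.d Y Y)

def Gdelta (D : Dissim X) (δ : ℝ) : SimpleGraph X where
  Adj x y := x ≠ y ∧ D.d x y ≠ δ
  symm := ⟨by
    rintro x y ⟨hxy, hd⟩
    exact ⟨hxy.symm, by rw [D.symm]; exact hd⟩⟩
  loopless := ⟨by rintro x ⟨h, -⟩; exact h rfl⟩

def Gle (D : Dissim X) (δ : ℝ) : SimpleGraph X where
  Adj x y := x ≠ y ∧ D.d x y ≤ δ
  symm := ⟨by
    rintro x y ⟨hxy, hd⟩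
    exact ⟨hxy.symm, by rw [D.symm]; exact hd⟩⟩
  loopless := ⟨by rintro x ⟨h, -⟩; exact h rfl⟩

def Glt (D : Dissim X) (δ : ℝ) : SimpleGraph X where
  Adj x y := x ≠ y ∧ D.d x y < δ
  symm := ⟨by
    rintro x y ⟨hxy, hd⟩
    exact ⟨hxy.symm, by rw [D.symm]; exact hd⟩⟩
  loopless := ⟨by rintro x ⟨h, -⟩; exact h rfl⟩

def IsCompOf {V : Type*} (G : SimpleGraph V) (C : Set V) : Prop :=
  ∃ x : V, C = {y | G.Reachable x y}

def MMax (D : Dissim X) : Set (Set X) :=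
  {M | IsMmodule D M ∧ M ≠ Set.univ ∧
    ∀ M' : Set X, IsMmodule D M' → M' ≠ Set.univ → M ⊆ M' → M = M'}

def IsPartition {α : Type*} (P : Set (Set α)) : Prop :=
  (∀ A ∈ P, A.Nonempty) ∧
  (∀ A ∈ P, ∀ B ∈ P, A ≠ B → Disjoint A B) ∧
  ⋃₀ P = Set.univ

def IsCopartition {α : Type*} (P : Set (Set α)) : Prop :=
  IsPartition ((fun M => Mᶜ) '' P)

def SimpleGraph.restrictTo {V : Type*} (G : SimpleGraph V) (S : Set V) : SimpleGraph V where
  Adj x y := x ∈ S ∧ y ∈ S ∧ G.Adj x y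
  symm := ⟨by rintro x y ⟨hx, hy, h⟩; exact ⟨hy, hx, h.symm⟩⟩
  loopless := ⟨by rintro x ⟨-, -, h⟩; exact G.loopless.1 x h⟩

def ConnectedWithin {V : Type*} (G : SimpleGraph V) (S : Set V) : Prop :=
  S.Nonempty ∧ ∀ x ∈ S, ∀ y ∈ S, (G.restrictTo S).Reachable x y

def IsCompWithin {V : Type*} (G : SimpleGraph V) (S : Set V) (C : Set V) : Prop :=
  ∃ x ∈ S, C = {y | (G.restrictTo S).Reachable x y}

def IsStrictTotalOrderOn {α : Type*} (S : Set α) (lt : α → α → Prop) : Prop :=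
  (∀ x ∈ S, ¬ lt x x) ∧
  (∀ x ∈ S, ∀ y ∈ S, ∀ z ∈ S, lt x y → lt y z → lt x z) ∧
  (∀ x ∈ S, ∀ y ∈ S, x ≠ y → (lt x y ∨ lt y x) ∧ ¬ (lt x y ∧ lt y x))

def CompatibleOn (D : Dissim X) (S : Set X) (lt : X → X → Prop) : Prop :=
  ∀ x ∈ S, ∀ y ∈ S, ∀ z ∈ S, lt x y → lt y z → D.d x y ≤ D.d x z ∧ D.d y z ≤ D.d x z

def IsCompatOrderOn (D : Dissim X) (S : Set X) (lt : X → X → Prop) : Prop :=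
  IsStrictTotalOrderOn S lt ∧ CompatibleOn D S lt

def FlatOn (D : Dissim X) (S : Set X) : Prop :=
  ∃ lt : X → X → Prop, IsCompatOrderOn D S lt ∧ (∃ x ∈ S, ∃ y ∈ S, lt x y) ∧
    ∀ lt' : X → X → Prop, IsCompatOrderOn D S lt' →
      (∀ x ∈ S, ∀ y ∈ S, (lt' x y ↔ lt x y)) ∨ (∀ x ∈ S, ∀ y ∈ S, (lt' x y ↔ lt y x))

def Flat (D : Dissim X) : Prop :=
  ∃ lt : X → X → Prop, IsCompatOrder D lt ∧ (∃ x y : X, lt x y) ∧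
    ∀ lt' : X → X → Prop, IsCompatOrder D lt' →
      (∀ x y : X, lt' x y ↔ lt x y) ∨ (∀ x y : X, lt' x y ↔ lt y x)

def IsCopointAt (D : Dissim X) (p : X) (C : Set X) : Prop :=
  IsMmodule D C ∧ C.Nonempty ∧ p ∉ C ∧
  ∀ C' : Set X, IsMmodule D C' → p ∉ C' → C ⊆ C' → C = C'

def bigGraph (D : Dissim X) (δ : ℝ) (I : Set (Set X)) : SimpleGraph (Set X) where
  Adj C C' := C ∈ I ∧ C' ∈ I ∧ C ≠ C' ∧ ∃ x ∈ C, ∃ y ∈ C', δ < D.d x y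
  symm := ⟨by
    rintro C C' ⟨hC, hC', hne, x, hx, y, hy, hd⟩
    exact ⟨hC', hC, hne.symm, y, hy, x, hx, by rw [D.symm]; exact hd⟩⟩
  loopless := ⟨by rintro C ⟨-, -, hne, -⟩; exact hne rfl⟩


/-
Two points in different components of G_δ are at distance exactly δ, and the diameter
bound puts every distance at most δ. If a compatible order placed a point b outside a component
between two points of it, walking inside the component from the left point to the right one would
cross b along an edge a a' with a < b < a'; compatibility then forces δ = d(a,b) ≤ d(a,a') ≤ δ,
contradicting d(a,a') ≠ δ. So the components are intervals of every compatible order, which makes it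
a composition. Conversely, in a composition any triple x < y < z either lies in one component, where
the component's order is compatible, or has d(x,z) = δ, the largest distance.
-/

section Components

open SimpleGraph

variable {V : Type*} {G : SimpleGraph V} {C C' : Set V} {x y : V}

theorem isCompOf_setOf_reachable (G : SimpleGraph V) (x : V) :
    IsCompOf G {y | G.Reachable x y} :=
  ⟨x, rfl⟩

theorem IsCompOf.eq_setOf_reachable (hC : IsCompOf G C) (hx : x ∈ C) :
    C = {y | G.Reachable x y} := by
  obtain ⟨x₀, rfl⟩ := hC
  ext y
  exact ⟨fun h => Reachable.trans (Reachable.symm hx) h, fun h => Reachable.trans hx h⟩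

theorem IsCompOf.reachable (hC : IsCompOf G C) (hx : x ∈ C) (hy : y ∈ C) : G.Reachable x y := by
  rw [hC.eq_setOf_reachable hx] at hy
  exact hy

theorem IsCompOf.eq_of_mem (hC : IsCompOf G C) (hC' : IsCompOf G C') (hx : x ∈ C)
    (hx' : x ∈ C') : C = C' := by
  rw [hC.eq_setOf_reachable hx, hC'.eq_setOf_reachable hx']

theorem isPartition_isCompOf (G : SimpleGraph V) : IsPartition {C | IsCompOf G C} := by
  refine ⟨?_, ?_, ?_⟩
  · rintro _ ⟨x, rfl⟩
    exact ⟨x, Reachable.refl x⟩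
  · intro C hC C' hC' hne
    exact Set.disjoint_left.2 fun x hx hx' => hne (IsCompOf.eq_of_mem hC hC' hx hx')
  · exact Set.eq_univ_of_forall fun x => ⟨_, isCompOf_setOf_reachable G x, Reachable.refl x⟩

end Components

section Partition

variable {P : Set (Set X)} {C C' : Set X} {x y z : X}

theorem IsPartition.exists_mem (hP : IsPartition P) (x : X) : ∃ C ∈ P, x ∈ C := by
  have hx : x ∈ ⋃₀ P := hP.2.2 ▸ Set.mem_univ x
  exact Set.mem_sUnion.1 hx

theorem IsPartition.eq_of_mem (hP : IsPartition P) (hC : C ∈ P) (hC' : C' ∈ P) (hx : x ∈ C)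
    (hx' : x ∈ C') : C = C' := by
  by_contra hne
  exact Set.disjoint_left.1 (hP.2.1 C hC C' hC' hne) hx hx'

def IsComposition (P : Set (Set X)) (bigLt : Set X → Set X → Prop) (ltP : Set X → X → X → Prop)
    (lt : X → X → Prop) : Prop :=
  ∀ x y : X, lt x y ↔
    ((∃ C : Set X, C ∈ P ∧ x ∈ C ∧ y ∈ C ∧ ltP C x y) ∨
     (∃ C C' : Set X, C ∈ P ∧ C' ∈ P ∧ C ≠ C' ∧ x ∈ C ∧ y ∈ C' ∧ bigLt C C'))

variable {bigLt : Set X → Set X → Prop} {ltP : Set X → X → X → Prop} {lt : X → X → Prop}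

theorem IsComposition.lt_iff (hP : IsPartition P) (h : IsComposition P bigLt ltP lt)
    (hC : C ∈ P) (hC' : C' ∈ P) (hx : x ∈ C) (hy : y ∈ C') :
    lt x y ↔ (C = C' ∧ ltP C x y) ∨ (C ≠ C' ∧ bigLt C C') := by
  rw [h x y]
  constructor
  · rintro (⟨D, hD, hxD, hyD, hlt⟩ | ⟨D, D', hD, hD', hne, hxD, hyD', hlt⟩)
    · obtain rfl := hP.eq_of_mem hC hD hx hxD
      obtain rfl := hP.eq_of_mem hC' hD hy hyD
      exact Or.inl ⟨rfl, hlt⟩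
    · obtain rfl := hP.eq_of_mem hC hD hx hxD
      obtain rfl := hP.eq_of_mem hC' hD' hy hyD'
      exact Or.inr ⟨hne, hlt⟩
  · rintro (⟨rfl, hlt⟩ | ⟨hne, hlt⟩)
    · exact Or.inl ⟨C, hC, hx, hy, hlt⟩
    · exact Or.inr ⟨C, C', hC, hC', hne, hx, hy, hlt⟩

theorem IsComposition.isStrictTotalOrder (hP : IsPartition P) (h : IsComposition P bigLt ltP lt)
    (hbig : IsStrictTotalOrderOn P bigLt) (hparts : ∀ C ∈ P, IsStrictTotalOrderOn C (ltP C)) :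
    IsStrictTotalOrder X lt := by
  have part := hP.exists_mem
  refine { trichotomous := fun x y hxy hyx => ?_, irrefl := fun x hx => ?_,
           trans := fun x y z hxy hyz => ?_ }
  · by_contra hne
    obtain ⟨C, hC, hxC⟩ := part x
    obtain ⟨C', hC', hyC'⟩ := part y
    rw [h.lt_iff hP hC hC' hxC hyC'] at hxy
    rw [h.lt_iff hP hC' hC hyC' hxC] at hyx
    by_cases hCC' : C = C'
    · subst hCC'
      rcases ((hparts C hC).2.2 x hxC y hyC' hne).1 with hlt | hlt
      exacts [hxy (Or.inl ⟨rfl, hlt⟩), hyx (Or.inl ⟨rfl, hlt⟩)]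
    · rcases (hbig.2.2 C hC C' hC' hCC').1 with hlt | hlt
      exacts [hxy (Or.inr ⟨hCC', hlt⟩), hyx (Or.inr ⟨Ne.symm hCC', hlt⟩)]
  · obtain ⟨C, hC, hxC⟩ := part x
    rcases (h.lt_iff hP hC hC hxC hxC).1 hx with ⟨-, hlt⟩ | ⟨hne, -⟩
    exacts [(hparts C hC).1 x hxC hlt, hne rfl]
  · obtain ⟨C, hC, hxC⟩ := part x
    obtain ⟨C', hC', hyC'⟩ := part y
    obtain ⟨C'', hC'', hzC''⟩ := part z
    rw [h.lt_iff hP hC hC' hxC hyC'] at hxy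
    rw [h.lt_iff hP hC' hC'' hyC' hzC''] at hyz
    rw [h.lt_iff hP hC hC'' hxC hzC'']
    rcases hxy with ⟨rfl, hxy⟩ | ⟨hne, hxy⟩ <;> rcases hyz with ⟨rfl, hyz⟩ | ⟨hne', hyz⟩
    · exact Or.inl ⟨rfl, (hparts C hC).2.1 x hxC y hyC' z hzC'' hxy hyz⟩
    · exact Or.inr ⟨hne', hyz⟩
    · exact Or.inr ⟨hne, hxy⟩
    · refine Or.inr ⟨?_, hbig.2.1 C hC C' hC' C'' hC'' hxy hyz⟩
      rintro rfl
      exact (hbig.2.2 C hC C' hC' hne).2 ⟨hxy, hyz⟩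

theorem IsComposition.mem_of_lt_of_lt (hP : IsPartition P) (h : IsComposition P bigLt ltP lt)
    (hbig : IsStrictTotalOrderOn P bigLt) (hC : C ∈ P) (hx : x ∈ C) (hz : z ∈ C)
    (hxy : lt x y) (hyz : lt y z) : y ∈ C := by
  obtain ⟨C', hC', hyC'⟩ := hP.exists_mem y
  rcases (h.lt_iff hP hC hC' hx hyC').1 hxy with ⟨rfl, -⟩ | ⟨hne, hCC'⟩
  · exact hyC'
  rcases (h.lt_iff hP hC' hC hyC' hz).1 hyz with ⟨rfl, -⟩ | ⟨-, hC'C⟩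
  · exact absurd rfl hne
  · exact absurd ⟨hCC', hC'C⟩ (hbig.2.2 C hC C' hC' hne).2

theorem IsInterval.lt_of_lt [IsStrictTotalOrder X lt] (hI : IsInterval lt C)
    (hI' : IsInterval lt C') (hdisj : Disjoint C C') {a b : X} (ha : a ∈ C) (hb : b ∈ C')
    (hab : lt a b) (ha' : x ∈ C) (hb' : y ∈ C') : lt x y := by
  rcases trichotomous_of lt x y with h | rfl | hyx
  · exact h
  · exact absurd hb' (Set.disjoint_left.1 hdisj ha')
  rcases trichotomous_of lt x b with hxb | rfl | hbx
  · exact absurd (hI' y x b hyx hxb hb' hb) (Set.disjoint_left.1 hdisj ha')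
  · exact absurd hb (Set.disjoint_left.1 hdisj ha')
  · exact absurd (hI a b x hab hbx ha ha') (Set.disjoint_right.1 hdisj hb)

theorem exists_isComposition_of_isInterval [IsStrictTotalOrder X lt] (hP : IsPartition P)
    (hI : ∀ C ∈ P, IsInterval lt C) :
    ∃ bigLt : Set X → Set X → Prop,
      IsStrictTotalOrderOn P bigLt ∧ IsComposition P bigLt (fun _ => lt) lt := by
  have below : ∀ C ∈ P, ∀ C' ∈ P, C ≠ C' → ∀ x ∈ C, ∀ y ∈ C', lt x y →
      ∀ x' ∈ C, ∀ y' ∈ C', lt x' y' := fun C hC C' hC' hne x hx y hy hxy x' hx' y' hy' =>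
    (hI C hC).lt_of_lt (hI C' hC') (hP.2.1 C hC C' hC' hne) hx hy hxy hx' hy'
  refine ⟨fun C C' => C ≠ C' ∧ ∀ x ∈ C, ∀ y ∈ C', lt x y, ⟨?_, ?_, ?_⟩, fun x y => ?_⟩
  · exact fun C _ h => h.1 rfl
  · rintro C hC C' hC' C'' hC'' ⟨hne, hCC'⟩ ⟨-, hC'C''⟩
    obtain ⟨y, hy⟩ := hP.1 C' hC'
    refine ⟨?_, fun x hx z hz => _root_.trans (hCC' x hx y hy) (hC'C'' y hy z hz)⟩
    rintro rfl
    obtain ⟨x, hx⟩ := hP.1 C hC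
    exact irrefl_of lt x (_root_.trans (hCC' x hx y hy) (hC'C'' y hy x hx))
  · intro C hC C' hC' hne
    obtain ⟨x, hx⟩ := hP.1 C hC
    obtain ⟨y, hy⟩ := hP.1 C' hC'
    refine ⟨?_, fun ⟨⟨_, hCC'⟩, ⟨_, hC'C⟩⟩ => asymm_of lt (hCC' x hx y hy) (hC'C y hy x hx)⟩
    rcases trichotomous_of lt x y with hxy | rfl | hyx
    · exact Or.inl ⟨hne, below C hC C' hC' hne x hx y hy hxy⟩
    · exact absurd hy (Set.disjoint_left.1 (hP.2.1 C hC C' hC' hne) hx)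
    · exact Or.inr ⟨Ne.symm hne, below C' hC' C hC (Ne.symm hne) y hy x hx hyx⟩
  · obtain ⟨C, hC, hx⟩ := hP.exists_mem x
    obtain ⟨C', hC', hy⟩ := hP.exists_mem y
    constructor
    · intro hxy
      by_cases hne : C = C'
      · exact Or.inl ⟨C, hC, hx, hne ▸ hy, hxy⟩
      · exact Or.inr ⟨C, C', hC, hC', hne, hx, hy, hne, below C hC C' hC' hne x hx y hy hxy⟩
    · rintro (⟨-, -, -, -, hxy⟩ | ⟨D, D', -, -, -, hxD, hyD', -, hDD'⟩)
      exacts [hxy, hDD' x hxD y hyD']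

end Partition

section Dissimilarity

variable {D : Dissim X} {lt : X → X → Prop}

theorem IsCompatOrder.isCompatOrderOn (h : IsCompatOrder D lt) (S : Set X) :
    IsCompatOrderOn D S lt := by
  have := h.1
  refine ⟨⟨fun x _ => irrefl_of lt x, fun x _ y _ z _ => _root_.trans, fun x _ y _ hne => ?_⟩,
    fun x _ y _ z _ => h.2 x y z⟩
  refine ⟨?_, fun ⟨hxy, hyx⟩ => asymm_of lt hxy hyx⟩
  rcases trichotomous_of lt x y with hxy | rfl | hyx
  exacts [Or.inl hxy, absurd rfl hne, Or.inr hyx]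

theorem dist_le_diam [Finite X] (D : Dissim X) {Y : Set X} {x y : X} (hx : x ∈ Y) (hy : y ∈ Y) :
    D.d x y ≤ diam D Y :=
  le_csSup (Set.toFinite _).bddAbove (Set.mem_image2_of_mem hx hy)

theorem Compatible.of_isComposition {P : Set (Set X)} {δ : ℝ} {bigLt : Set X → Set X → Prop}
    {ltP : Set X → X → X → Prop} (hP : IsPartition P)
    (hle : ∀ C ∈ P, ∀ x ∈ C, ∀ y ∈ C, D.d x y ≤ δ)
    (heq : ∀ C ∈ P, ∀ C' ∈ P, C ≠ C' → ∀ x ∈ C, ∀ y ∈ C', D.d x y = δ)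
    (h : IsComposition P bigLt ltP lt) (hbig : IsStrictTotalOrderOn P bigLt)
    (hparts : ∀ C ∈ P, CompatibleOn D C (ltP C)) : Compatible D lt := by
  have hle_all (x y : X) : D.d x y ≤ δ := by
    obtain ⟨C, hC, hx⟩ := hP.exists_mem x
    obtain ⟨C', hC', hy⟩ := hP.exists_mem y
    by_cases hne : C = C'
    · exact hle C hC x hx y (hne ▸ hy)
    · exact (heq C hC C' hC' hne x hx y hy).le
  intro x y z hxy hyz
  obtain ⟨C, hC, hx⟩ := hP.exists_mem x
  obtain ⟨C', hC', hz⟩ := hP.exists_mem z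
  by_cases hne : C = C'
  · subst hne
    have hy := h.mem_of_lt_of_lt hP hbig hC hx hz hxy hyz
    have inside {u v : X} (hu : u ∈ C) (hv : v ∈ C) (huv : lt u v) : ltP C u v := by
      rcases (h.lt_iff hP hC hC hu hv).1 huv with ⟨-, h⟩ | ⟨hne, -⟩
      exacts [h, absurd rfl hne]
    exact hparts C hC x hx y hy z hz (inside hx hy hxy) (inside hy hz hyz)
  · rw [heq C hC C' hC' hne x hx z hz]
    exact ⟨hle_all x y, hle_all y z⟩

variable {δ : ℝ}

theorem dist_eq_of_not_reachable {x y : X} (h : ¬ (Gdelta D δ).Reachable x y) : D.d x y = δ := by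
  by_contra hne
  have hxy : x ≠ y := by rintro rfl; exact h (SimpleGraph.Reachable.refl x)
  exact h (SimpleGraph.Adj.reachable ⟨hxy, hne⟩)

theorem dist_eq_of_isCompOf_ne {C C' : Set X} (hC : IsCompOf (Gdelta D δ) C)
    (hC' : IsCompOf (Gdelta D δ) C') (hne : C ≠ C') {x y : X} (hx : x ∈ C) (hy : y ∈ C') :
    D.d x y = δ :=
  dist_eq_of_not_reachable fun hxy =>
    hne (hC.eq_of_mem hC' (hC.eq_setOf_reachable hx ▸ hxy : y ∈ C) hy)

theorem IsCompatOrder.not_lt_lt_of_walk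
    (hle : ∀ C, IsCompOf (Gdelta D δ) C → ∀ x ∈ C, ∀ y ∈ C, D.d x y ≤ δ)
    (h : IsCompatOrder D lt) {b : X} :
    ∀ {a c : X}, (Gdelta D δ).Walk a c → ¬ (Gdelta D δ).Reachable a b → lt a b → lt b c → False
  | a, _, .nil, _, hab, hbc => h.1.irrefl a (h.1.trans _ _ _ hab hbc)
  | a, c, .cons (v := a') hadj w, hnab, hab, hbc => by
    have := h.1
    have hna'b : ¬ (Gdelta D δ).Reachable a' b := fun h' => hnab (hadj.reachable.trans h')
    rcases trichotomous_of lt a' b with ha'b | rfl | hba'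
    · exact h.not_lt_lt_of_walk hle w hna'b ha'b hbc
    · exact hnab hadj.reachable
    · have hδ : δ ≤ D.d a a' := dist_eq_of_not_reachable hnab ▸ (h.2 a b a' hab hba').1
      have hC := isCompOf_setOf_reachable (Gdelta D δ) a
      exact hadj.2 (le_antisymm (hle _ hC a (.refl a) a' hadj.reachable) hδ)

theorem IsCompatOrder.isInterval_of_isCompOf
    (hle : ∀ C, IsCompOf (Gdelta D δ) C → ∀ x ∈ C, ∀ y ∈ C, D.d x y ≤ δ)
    (h : IsCompatOrder D lt) {C : Set X} (hC : IsCompOf (Gdelta D δ) C) : IsInterval lt C := by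
  intro a b c hab hbc ha hc
  by_contra hb
  obtain ⟨w⟩ := hC.reachable ha hc
  refine h.not_lt_lt_of_walk hle w (fun hr => hb ?_) hab hbc
  rw [hC.eq_setOf_reachable ha]
  exact hr

end Dissimilarity

theorem stmt12_general [Fintype X] (D : Dissim X)
    (δstar : ℝ)
    (hdiam : ∀ C : Set X, IsCompOf (Gdelta D δstar) C → diam D C ≤ δstar)
    (lt : X → X → Prop) :
    IsCompatOrder D lt ↔
      ∃ (bigLt : Set X → Set X → Prop) (ltP : Set X → X → X → Prop),
        IsStrictTotalOrderOn {C : Set X | IsCompOf (Gdelta D δstar) C} bigLt ∧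
        (∀ C : Set X, IsCompOf (Gdelta D δstar) C → IsCompatOrderOn D C (ltP C)) ∧
        (∀ x y : X, lt x y ↔
          ((∃ C : Set X, IsCompOf (Gdelta D δstar) C ∧ x ∈ C ∧ y ∈ C ∧ ltP C x y) ∨
           (∃ C C' : Set X, IsCompOf (Gdelta D δstar) C ∧
              IsCompOf (Gdelta D δstar) C' ∧ C ≠ C' ∧
              x ∈ C ∧ y ∈ C' ∧ bigLt C C'))) := by
  have hP := isPartition_isCompOf (Gdelta D δstar)
  have hle : ∀ C, IsCompOf (Gdelta D δstar) C → ∀ x ∈ C, ∀ y ∈ C, D.d x y ≤ δstar :=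
    fun C hC x hx y hy => (dist_le_diam D hx hy).trans (hdiam C hC)
  constructor
  · intro h
    have := h.1
    obtain ⟨bigLt, hbig, hcomp⟩ :=
      exists_isComposition_of_isInterval hP fun C hC => h.isInterval_of_isCompOf hle hC
    exact ⟨bigLt, fun _ => lt, hbig, fun C _ => h.isCompatOrderOn C, hcomp⟩
  · rintro ⟨bigLt, ltP, hbig, hparts, hcomp⟩
    have heq : ∀ C, IsCompOf (Gdelta D δstar) C → ∀ C', IsCompOf (Gdelta D δstar) C' → C ≠ C' →
        ∀ x ∈ C, ∀ y ∈ C', D.d x y = δstar :=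
      fun C hC C' hC' hne x hx y hy => dist_eq_of_isCompOf_ne hC hC' hne hx hy
    exact ⟨IsComposition.isStrictTotalOrder hP hcomp hbig fun C hC => (hparts C hC).1,
      .of_isComposition hP hle heq hcomp hbig fun C hC => (hparts C hC).2⟩

/-- in a non-connected Robinson space whose δ*-components all have
diameter at most δ*, the compatible orders are exactly the compositions of an
arbitrary order on the components with compatible orders of each component. -/
theorem stmt12 [Fintype X] [Nonempty X] (D : Dissim X)
    (hpos : ∀ x y : X, x ≠ y → 0 < D.d x y)
    (hRob : Robinson D)
    (δstar : ℝ)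
    (hls : IsLeast {δ : ℝ | 0 < δ ∧ (Gle D δ).Connected} δstar)
    (hnc : ¬ (Gdelta D δstar).Connected)
    (hdiam : ∀ C : Set X, IsCompOf (Gdelta D δstar) C → diam D C ≤ δstar)
    (lt : X → X → Prop) :
    IsCompatOrder D lt ↔
      ∃ (bigLt : Set X → Set X → Prop) (ltP : Set X → X → X → Prop),
        IsStrictTotalOrderOn {C : Set X | IsCompOf (Gdelta D δstar) C} bigLt ∧
        (∀ C : Set X, IsCompOf (Gdelta D δstar) C → IsCompatOrderOn D C (ltP C)) ∧
        (∀ x y : X, lt x y ↔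
          ((∃ C : Set X, IsCompOf (Gdelta D δstar) C ∧ x ∈ C ∧ y ∈ C ∧ ltP C x y) ∨
           (∃ C C' : Set X, IsCompOf (Gdelta D δstar) C ∧
              IsCompOf (Gdelta D δstar) C' ∧ C ≠ C' ∧
              x ∈ C ∧ y ∈ C' ∧ bigLt C C'))) :=
  stmt12_general D δstar hdiam lt
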